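/- Let H be a separable complex Hilbert space and let x, y : ℤ → H form a pair of dual Riesz bases for H. Then the family consisting of (n ↦ x_{3n}), (n ↦ (1/2)(x_{3n−1} + x_{3n+1})), and (n ↦ x_{3n+1} − x_{3n−1}) is a Riesz basis for H whose dual Riesz basis is (n ↦ y_{3n}), (n ↦ y_{3n−1} + y_{3n+1}), and (n ↦ (1/2)(y_{3n+1} − y_{3n−1})) respectively; in particular, for every F ∈ H, F = ∑_{n∈ℤ} [ ⟨F, x_{3n}⟩ y_{3n} + ⟨F, (1/2)(x_{3n−1} + x_{3n+1})⟩(y_{3n−1} + y_{3n+1}) + ⟨F, x_{3n+1} − x_{3n−1}⟩·(1/2)(y_{3n+1} − y_{3n−1}) ] with unconditional convergence over Fin 3 × ℤ. -/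

import Mathlib

noncomputable section
open scoped Classical

local notation "⟪" f ", " g "⟫" => @inner ℂ _ _ g f

/-- A family `x : ι → H` is a Riesz basis for `H` if it is the image of a Hilbert
(orthonormal) basis of `H` under a continuous linear equivalence of `H`. -/
def IsRieszBasis {H : Type*} [NormedAddCommGroup H] [InnerProductSpace ℂ H]
    {ι : Type*} (x : ι → H) : Prop :=
  ∃ (e : HilbertBasis ι ℂ H) (T : H ≃L[ℂ] H), ∀ i, x i = T (e i)

/-- Families `x, y : ι → H` form a pair of dual Riesz bases: both are Riesz bases,
they are biorthogonal, and `∑ᵢ ⟨f, yᵢ⟩ xᵢ = f` for every `f` (inner product linear in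
the first argument, conjugate-linear in the second). -/
def IsDualRieszBasisPair {H : Type*} [NormedAddCommGroup H] [InnerProductSpace ℂ H]
    {ι : Type*} (x y : ι → H) : Prop :=
  IsRieszBasis x ∧ IsRieszBasis y ∧
    (∀ i j, ⟪x i, y j⟫ = if i = j then (1 : ℂ) else 0) ∧
    ∀ f : H, HasSum (fun i => ⟪f, y i⟫ • x i) f


/-! Reindex `x` and `y` by `σ (k, n) = 3n + (0, -1, 1)ₖ`. Then `z` and `w` arise from them by
applying, inside every block `n`, the same invertible `3 × 3` matrices `A` and `B`, and `Bᴴ A = 1`.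
Relative to a Hilbert basis, such a block-diagonal change of basis is a bounded invertible
operator (a combination of coordinate projections and permutations), so `z` and `w` are again
Riesz bases, and `Bᴴ A = 1` is exactly their biorthogonality. For a biorthogonal pair of Riesz
bases the reconstruction formula is automatic: the coefficients `⟪f, y i⟫` are `ℓ²`-coordinates, so
the series converges, and its sum has the same inner products as `f` with the complete family
`y`. -/

open Submodule ContinuousLinearMap
open scoped Matrix

namespace HilbertBasis

variable {ι κ 𝕜 E : Type*} [RCLike 𝕜] [NormedAddCommGroup E] [InnerProductSpace 𝕜 E]

theorem continuousLinearMap_ext {F : Type*} [NormedAddCommGroup F] [NormedSpace 𝕜 F]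
    (b : HilbertBasis ι 𝕜 E) {f g : E →L[𝕜] F} (h : ∀ i, f (b i) = g (b i)) : f = g :=
  ext_on (dense_iff_topologicalClosure_eq_top.mpr b.dense_span) (by rintro _ ⟨i, rfl⟩; exact h i)

variable [CompleteSpace E]

protected def reindex (b : HilbertBasis ι 𝕜 E) (σ : κ ≃ ι) : HilbertBasis κ 𝕜 E :=
  HilbertBasis.mk (b.orthonormal.comp σ σ.injective)
    (by rw [σ.surjective.range_comp, b.dense_span])

@[simp]
theorem reindex_apply (b : HilbertBasis ι 𝕜 E) (σ : κ ≃ ι) (k : κ) : b.reindex σ k = b (σ k) :=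
  congrFun (HilbertBasis.coe_mk _ _) k

def permute (b : HilbertBasis ι 𝕜 E) (π : Equiv.Perm ι) : E ≃ₗᵢ[𝕜] E :=
  b.repr.trans (b.reindex π).repr.symm

theorem permute_apply_self (b : HilbertBasis ι 𝕜 E) (π : Equiv.Perm ι) (i : ι) :
    b.permute π (b i) = b (π i) := by
  classical
  rw [permute, LinearIsometryEquiv.trans_apply, b.repr_self, HilbertBasis.repr_symm_single,
    reindex_apply]

def spanProj (b : HilbertBasis ι 𝕜 E) (s : Set ι) : E →L[𝕜] E :=
  (span 𝕜 (b '' s)).topologicalClosure.starProjection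

theorem spanProj_apply_self_of_mem (b : HilbertBasis ι 𝕜 E) {s : Set ι} {i : ι} (hi : i ∈ s) :
    b.spanProj s (b i) = b i :=
  starProjection_eq_self_iff.mpr <| le_topologicalClosure _ <| subset_span ⟨i, hi, rfl⟩

theorem spanProj_apply_self_of_notMem (b : HilbertBasis ι 𝕜 E) {s : Set ι} {i : ι} (hi : i ∉ s) :
    b.spanProj s (b i) = 0 := by
  refine (starProjection_apply_eq_zero_iff _).mpr ?_
  rw [orthogonal_closure]
  refine IsOrtho.le ?_ (mem_span_singleton_self (b i))
  simp only [isOrtho_span, Set.mem_singleton_iff, Set.mem_image, forall_eq]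
  rintro _ ⟨j, hj, rfl⟩
  exact b.orthonormal.2 (ne_of_mem_of_not_mem hj hi).symm

variable [DecidableEq ι]

def matrixUnit (b : HilbertBasis (ι × κ) 𝕜 E) (l k : ι) : E →L[𝕜] E :=
  ((b.permute ((Equiv.swap k l).prodCongr (Equiv.refl κ))).toContinuousLinearEquiv :
    E →L[𝕜] E) ∘L b.spanProj ({k} ×ˢ Set.univ)

theorem matrixUnit_apply_self (b : HilbertBasis (ι × κ) 𝕜 E) (l k j : ι) (n : κ) :
    b.matrixUnit l k (b (j, n)) = if j = k then b (l, n) else 0 := by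
  rw [matrixUnit, comp_apply]
  split_ifs with h
  · subst h
    rw [b.spanProj_apply_self_of_mem (i := (j, n)) (by simp)]
    simp [permute_apply_self]
  · rw [b.spanProj_apply_self_of_notMem (i := (j, n)) (by simpa using h), map_zero]

variable [Fintype ι]

def blockDiagonal (b : HilbertBasis (ι × κ) 𝕜 E) (M : Matrix ι ι 𝕜) : E →L[𝕜] E :=
  ∑ k, ∑ l, M l k • b.matrixUnit l k

theorem blockDiagonal_apply_self (b : HilbertBasis (ι × κ) 𝕜 E) (M : Matrix ι ι 𝕜) (j : ι)
    (n : κ) :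
    b.blockDiagonal M (b (j, n)) = ∑ l, M l j • b (l, n) := by
  simp [blockDiagonal, sum_apply, matrixUnit_apply_self]

theorem blockDiagonal_one (b : HilbertBasis (ι × κ) 𝕜 E) : b.blockDiagonal 1 = 1 :=
  b.continuousLinearMap_ext fun ⟨j, n⟩ => by simp [blockDiagonal_apply_self, Matrix.one_apply]

theorem blockDiagonal_mul (b : HilbertBasis (ι × κ) 𝕜 E) (M N : Matrix ι ι 𝕜) :
    b.blockDiagonal (M * N) = b.blockDiagonal M * b.blockDiagonal N :=
  b.continuousLinearMap_ext fun ⟨j, n⟩ => by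
    simp only [mul_apply_eq_comp, blockDiagonal_apply_self, map_sum, map_smul,
      Matrix.mul_apply, Finset.sum_smul, Finset.smul_sum, smul_smul]
    rw [Finset.sum_comm]
    simp_rw [mul_comm (N _ j)]

def blockDiagonalHom (b : HilbertBasis (ι × κ) 𝕜 E) : Matrix ι ι 𝕜 →* (E →L[𝕜] E) where
  toFun := b.blockDiagonal
  map_one' := b.blockDiagonal_one
  map_mul' := b.blockDiagonal_mul

end HilbertBasis

def blockCombination {R M ι κ : Type*} [Semiring R] [AddCommMonoid M] [Module R M] [Fintype ι]
    (A : Matrix ι ι R) (v : ι × κ → M) : ι × κ → M :=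
  fun i => ∑ l, A l i.1 • v (l, i.2)

section RieszBasis

variable {H ι κ : Type*} [NormedAddCommGroup H] [InnerProductSpace ℂ H]

theorem IsRieszBasis.ext_inner {x : ι → H} (hx : IsRieszBasis x) {f g : H}
    (h : ∀ i, ⟪f, x i⟫ = ⟪g, x i⟫) : f = g := by
  obtain ⟨e, T, hT⟩ := hx
  have hexp : ∀ (f : H) u, HasSum (fun i => e.repr u i • inner ℂ f (x i)) (inner ℂ f (T u)) :=
    fun f u => by simpa [hT] using (e.hasSum_repr u).mapL ((innerSL ℂ f).comp (T : H →L[ℂ] H))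
  refine ext_inner_right ℂ fun v => ?_
  rw [← T.apply_symm_apply v]
  refine (hexp f _).unique ?_
  convert hexp g (T.symm v) using 3 with i
  rw [← inner_conj_symm, h i, inner_conj_symm]

variable [CompleteSpace H]

theorem IsDualRieszBasisPair.of_biorthogonal {x y : ι → H} (hx : IsRieszBasis x)
    (hy : IsRieszBasis y) (hxy : ∀ i j, ⟪x i, y j⟫ = if i = j then 1 else 0) :
    IsDualRieszBasisPair x y := by
  refine ⟨hx, hy, hxy, fun f => ?_⟩
  obtain ⟨ex, Tx, hTx⟩ := hx
  obtain ⟨ey, Ty, hTy⟩ := id hy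
  set c := ey.repr (adjoint (Ty : H →L[ℂ] H) f)
  have hsum : HasSum (fun i => ⟪f, y i⟫ • x i) (Tx (ex.repr.symm c)) := by
    convert (ex.hasSum_repr_symm c).mapL (Tx : H →L[ℂ] H) using 1
    · funext i
      simp only [c, ey.repr_apply_apply, adjoint_inner_right, hTx, hTy,
        ContinuousLinearEquiv.coe_coe, map_smul]
    · rfl
  suffices Tx (ex.repr.symm c) = f by rwa [this] at hsum
  refine hy.ext_inner fun j => ?_
  have hcoeff := hsum.mapL (innerSL ℂ (y j))
  simp only [innerSL_apply_apply, inner_smul_right, hxy, mul_ite, mul_one, mul_zero] at hcoeff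
  have hδ : (fun i => if i = j then ⟪f, y i⟫ else 0) = fun i => if i = j then ⟪f, y j⟫ else 0 := by
    funext i
    split_ifs with h <;> simp [h]
  rw [hδ] at hcoeff
  exact hcoeff.unique (hasSum_ite_eq j _)

theorem IsDualRieszBasisPair.symm {x y : ι → H} (h : IsDualRieszBasisPair x y) :
    IsDualRieszBasisPair y x := by
  refine of_biorthogonal h.2.1 h.1 fun i j => ?_
  rw [← inner_conj_symm, h.2.2.1 j i]
  split_ifs <;> simp_all [eq_comm]

theorem IsRieszBasis.comp_equiv {x : ι → H} (hx : IsRieszBasis x) (σ : κ ≃ ι) :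
    IsRieszBasis (x ∘ σ) := by
  obtain ⟨e, T, hT⟩ := hx
  exact ⟨e.reindex σ, T, fun k => by simp [hT]⟩

theorem IsRieszBasis.blockCombination [Fintype ι] [DecidableEq ι] {v : ι × κ → H}
    (hv : IsRieszBasis v) {A : Matrix ι ι ℂ} (hA : IsUnit A) :
    IsRieszBasis (blockCombination A v) := by
  obtain ⟨e, T, hT⟩ := hv
  let B := ContinuousLinearEquiv.unitsEquiv ℂ H (hA.map e.blockDiagonalHom).unit
  refine ⟨e, B.trans T, fun ⟨j, n⟩ => ?_⟩
  simp [B, _root_.blockCombination, hT, HilbertBasis.blockDiagonalHom,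
    HilbertBasis.blockDiagonal_apply_self]

theorem IsDualRieszBasisPair.comp_equiv {x y : ι → H} (h : IsDualRieszBasisPair x y)
    (σ : κ ≃ ι) : IsDualRieszBasisPair (x ∘ σ) (y ∘ σ) :=
  .of_biorthogonal (h.1.comp_equiv σ) (h.2.1.comp_equiv σ) fun i j => by
    simp [h.2.2.1, σ.injective.eq_iff]

theorem IsDualRieszBasisPair.blockCombination [Fintype ι] [DecidableEq ι] {v u : ι × κ → H}
    (h : IsDualRieszBasisPair v u) {A B : Matrix ι ι ℂ} (hBA : Bᴴ * A = 1) :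
    IsDualRieszBasisPair (blockCombination A v) (blockCombination B u) := by
  refine .of_biorthogonal (h.1.blockCombination (.of_mul_eq_one_right _ hBA))
    (h.2.1.blockCombination ((Matrix.isUnit_conjTranspose _).mp (.of_mul_eq_one _ hBA))) ?_
  rintro ⟨i, m⟩ ⟨j, n⟩
  simp only [_root_.blockCombination, sum_inner, inner_sum, inner_smul_left, inner_smul_right,
    h.2.2.1, Prod.mk.injEq]
  by_cases hmn : m = n
  · have hji := congrFun (congrFun hBA j) i
    simp only [Matrix.mul_apply, Matrix.conjTranspose_apply, Matrix.one_apply] at hji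
    simp only [hmn, and_true, mul_ite, mul_zero, Finset.sum_ite_eq, Finset.mem_univ, if_true]
    simpa [eq_comm, mul_comm] using hji.symm
  · simp [hmn]

end RieszBasis

def finThreeProdIntEquiv : Fin 3 × ℤ ≃ ℤ :=
  Equiv.ofBijective (fun i => 3 * i.2 + ![0, -1, 1] i.1) <| by
    constructor
    · rintro ⟨k, n⟩ ⟨k', n'⟩ h
      fin_cases k <;> fin_cases k' <;>
        simp only [Fin.zero_eta, Fin.mk_one, Fin.reduceFinMk, Fin.isValue, Matrix.cons_val,
          Matrix.cons_val_zero, Matrix.cons_val_one, Prod.mk.injEq, Fin.reduceEq, false_and,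
          true_and] at h ⊢ <;>
        omega
    · intro j
      obtain h | h | h : j % 3 = 0 ∨ j % 3 = 1 ∨ j % 3 = 2 := by omega
      · exact ⟨(0, j / 3), by simp only [Matrix.cons_val_zero]; omega⟩
      · exact ⟨(2, j / 3), by simp only [Matrix.cons_val]; omega⟩
      · exact ⟨(1, j / 3 + 1), by simp only [Matrix.cons_val_one, Matrix.cons_val_zero]; omega⟩

theorem finThreeProdIntEquiv_apply (i : Fin 3 × ℤ) :
    finThreeProdIntEquiv i = 3 * i.2 + ![0, -1, 1] i.1 :=
  rfl

theorem finThreeProdIntEquiv_zero (n : ℤ) : finThreeProdIntEquiv (0, n) = 3 * n := by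
  simp [finThreeProdIntEquiv_apply]

theorem finThreeProdIntEquiv_one (n : ℤ) : finThreeProdIntEquiv (1, n) = 3 * n - 1 := by
  simp [finThreeProdIntEquiv_apply, sub_eq_add_neg]

theorem finThreeProdIntEquiv_two (n : ℤ) : finThreeProdIntEquiv (2, n) = 3 * n + 1 := by
  simp [finThreeProdIntEquiv_apply]

theorem stmt17_general {H : Type*} [NormedAddCommGroup H] [InnerProductSpace ℂ H]
    [CompleteSpace H]
    (x y : ℤ → H) (hxy : IsDualRieszBasisPair x y)
    (z w : Fin 3 × ℤ → H)
    (hz : ∀ i : Fin 3 × ℤ, z i =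
      ![x (3 * i.2),
        ((1 : ℂ) / 2) • (x (3 * i.2 - 1) + x (3 * i.2 + 1)),
        x (3 * i.2 + 1) - x (3 * i.2 - 1)] i.1)
    (hw : ∀ i : Fin 3 × ℤ, w i =
      ![y (3 * i.2),
        y (3 * i.2 - 1) + y (3 * i.2 + 1),
        ((1 : ℂ) / 2) • (y (3 * i.2 + 1) - y (3 * i.2 - 1))] i.1) :
    IsDualRieszBasisPair z w ∧
      ∀ F : H, HasSum (fun i : Fin 3 × ℤ => ⟪F, z i⟫ • w i) F := by
  let σ := finThreeProdIntEquiv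
  -- column `k` of `A` lists the coefficients of `z (k, n)` on `x (3n), x (3n - 1), x (3n + 1)`;
  -- likewise `B` for `w` and `y`
  let A : Matrix (Fin 3) (Fin 3) ℂ := !![1, 0, 0; 0, 1/2, -1; 0, 1/2, 1]
  let B : Matrix (Fin 3) (Fin 3) ℂ := !![1, 0, 0; 0, 1, -1/2; 0, 1, 1/2]
  have hBA : Bᴴ * A = 1 := by
    ext i j
    fin_cases i <;> fin_cases j <;>
      simp [A, B, Matrix.mul_apply, Fin.sum_univ_three, map_ofNat] <;> norm_num
  obtain ⟨rfl, rfl⟩ : z = blockCombination A (x ∘ σ) ∧ w = blockCombination B (y ∘ σ) := by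
    constructor <;> funext ⟨k, n⟩ <;> fin_cases k <;>
      simp only [hz, hw, blockCombination, A, B, σ, Fin.sum_univ_three, Function.comp_apply,
        finThreeProdIntEquiv_zero, finThreeProdIntEquiv_one, finThreeProdIntEquiv_two,
        Fin.zero_eta, Fin.mk_one, Fin.reduceFinMk, Fin.isValue, Matrix.of_apply,
        Matrix.cons_val', Matrix.cons_val_zero, Matrix.cons_val_one, Matrix.cons_val_two,
        Matrix.cons_val_fin_one, Matrix.tail_cons, Matrix.vecHead] <;>
      module
  have hzw := (hxy.comp_equiv σ).blockCombination hBA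
  exact ⟨hzw, hzw.symm.2.2.2⟩

theorem stmt17 {H : Type*} [NormedAddCommGroup H] [InnerProductSpace ℂ H]
    [CompleteSpace H] [TopologicalSpace.SeparableSpace H]
    (x y : ℤ → H) (hxy : IsDualRieszBasisPair x y)
    (z w : Fin 3 × ℤ → H)
    (hz : ∀ i : Fin 3 × ℤ, z i =
      ![x (3 * i.2),
        ((1 : ℂ) / 2) • (x (3 * i.2 - 1) + x (3 * i.2 + 1)),
        x (3 * i.2 + 1) - x (3 * i.2 - 1)] i.1)
    (hw : ∀ i : Fin 3 × ℤ, w i =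
      ![y (3 * i.2),
        y (3 * i.2 - 1) + y (3 * i.2 + 1),
        ((1 : ℂ) / 2) • (y (3 * i.2 + 1) - y (3 * i.2 - 1))] i.1) :
    IsDualRieszBasisPair z w ∧
      ∀ F : H, HasSum (fun i : Fin 3 × ℤ => ⟪F, z i⟫ • w i) F :=
  stmt17_general x y hxy z w hz hw
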